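/- Let (t_k) be a sequence of positive reals with t_k → 0, for each k let (x^k,y^k) be a Karush–Kuhn–Tucker point of the Scholtes-type regularization S(t_k), and suppose (x^k,y^k) → (x̄,ȳ) where (x̄,ȳ) is a nondegenerate T-stationary point of the regularized continuous reformulation R. Then for all sufficiently large k the biactive set is absorbed by the active relaxed orthogonality constraints: a00(x̄,ȳ) ⊆ H(x^k,y^k). -/

import Mathlib

open scoped Classical
open Finset Filter Topology

noncomputable section
namespace Scholtes

/-- Vectors in ℝⁿ. -/
abbrev Vec (n : ℕ) := Fin n → ℝ

variable {n : ℕ} {P Q : Type*} [Fintype P] [Fintype Q]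

/-- Euclidean dot product. -/
def dot (u v : Vec n) : ℝ := ∑ i, u i * v i

/-- Gradient: vector of partial derivatives. -/
def grad (f : Vec n → ℝ) (x : Vec n) : Vec n := fun i => fderiv ℝ f x (Pi.single i 1)

/-- Hessian bilinear form of `L` at `z`, evaluated at directions `ξ`, `ζ`. -/
def hess (L : Vec n × Vec n → ℝ) (z ξ ζ : Vec n × Vec n) : ℝ :=
  fderiv ℝ (fun w => fderiv ℝ L w ξ) z ζ

/-- The pair vector (e_i, 0) ∈ ℝ²ⁿ. -/
def ex (i : Fin n) : Vec n × Vec n := (Pi.single i 1, 0)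

/-- The pair vector (0, e_i) ∈ ℝ²ⁿ. -/
def ey (i : Fin n) : Vec n × Vec n := (0, Pi.single i 1)

/-- The pair vector (0, e) ∈ ℝ²ⁿ, where e is the all-ones vector. -/
def eAll : Vec n × Vec n := (0, fun _ => 1)

/-- The pair vector (y_i e_i, x_i e_i) ∈ ℝ²ⁿ. -/
def hvec (x y : Vec n) (i : Fin n) : Vec n × Vec n := (Pi.single i (y i), Pi.single i (x i))

/-- The number of negative eigenvalues of the bilinear form `B` restricted to the
(sub)space `T`, expressed as the maximal dimension of a linear subspace of `T` on
which the associated quadratic form is negative definite. -/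
def negIndex (B : (Vec n × Vec n) → (Vec n × Vec n) → ℝ) (T : (Vec n × Vec n) → Prop) : ℕ :=
  sSup {d : ℕ | ∃ W : Submodule ℝ (Vec n × Vec n),
    (∀ ξ ∈ W, T ξ) ∧ Module.finrank ℝ W = d ∧ ∀ ξ ∈ W, ξ ≠ 0 → B ξ ξ < 0}

/-- The data and standing assumptions of the paper: objective `f`, equality
constraints `h`, inequality constraints `g`, positive pairwise different linear
coefficients `c`, cardinality bound `s` and regularization parameter `ε`. -/
structure Setting (n : ℕ) (P Q : Type*) [Fintype P] [Fintype Q] where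
  f : Vec n → ℝ
  h : P → Vec n → ℝ
  g : Q → Vec n → ℝ
  c : Vec n
  s : ℕ
  ε : ℝ
  hn : 1 ≤ n
  hf : ContDiff ℝ 2 f
  hh : ∀ p, ContDiff ℝ 2 (h p)
  hg : ∀ q, ContDiff ℝ 2 (g q)
  hcpos : ∀ i, 0 < c i
  hcinj : Function.Injective c
  hs : s < n
  hεpos : 0 < ε
  hεle : ε ≤ 1 / ((n : ℝ) - s)

/-- Index set a01: x̄_i = 0, ȳ_i > 0. -/
def a01 (x y : Vec n) : Finset (Fin n) := univ.filter fun i => x i = 0 ∧ 0 < y i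

/-- Index set a10: x̄_i ≠ 0, ȳ_i = 0. -/
def a10 (x y : Vec n) : Finset (Fin n) := univ.filter fun i => x i ≠ 0 ∧ y i = 0

/-- Index set a00: x̄_i = 0, ȳ_i = 0. -/
def a00 (x y : Vec n) : Finset (Fin n) := univ.filter fun i => x i = 0 ∧ y i = 0

/-- Index set N(y): y_i = 0. -/
def Nact (y : Vec n) : Finset (Fin n) := univ.filter fun i => y i = 0

/-- Index set H≥(x,y): x_i y_i = −t. -/
def Hge (t : ℝ) (x y : Vec n) : Finset (Fin n) := univ.filter fun i => x i * y i = -t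

/-- Index set H≤(x,y): x_i y_i = t. -/
def Hle (t : ℝ) (x y : Vec n) : Finset (Fin n) := univ.filter fun i => x i * y i = t

/-- Index set H(x,y) = H≥ ∪ H≤. -/
def Hact (t : ℝ) (x y : Vec n) : Finset (Fin n) := Hge t x y ∪ Hle t x y

/-- Active inequality constraints Q0(x). -/
def Q0 (D : Setting n P Q) (x : Vec n) : Finset Q := univ.filter fun q => D.g q x = 0

/-- Active upper bounds E(y): y_i = 1 + ε. -/
def Eact (D : Setting n P Q) (y : Vec n) : Finset (Fin n) := univ.filter fun i => y i = 1 + D.ε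

/-- Index set O(x,y) = complement of E(y) ∪ N(y) ∪ H(x,y). -/
def Oact (D : Setting n P Q) (t : ℝ) (x y : Vec n) : Finset (Fin n) :=
  (Eact D y ∪ Nact y ∪ Hact t x y)ᶜ

/-- Feasibility for the regularized continuous reformulation R. -/
def feasR (D : Setting n P Q) (x y : Vec n) : Prop :=
  (∀ p, D.h p x = 0) ∧ (∀ q, 0 ≤ D.g q x) ∧ ((n : ℝ) - D.s ≤ ∑ i, y i) ∧
  (∀ i, x i * y i = 0) ∧ (∀ i, 0 ≤ y i ∧ y i ≤ 1 + D.ε)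

/-- Feasibility for the Scholtes-type regularization S(t). -/
def feasS (D : Setting n P Q) (t : ℝ) (x y : Vec n) : Prop :=
  (∀ p, D.h p x = 0) ∧ (∀ q, 0 ≤ D.g q x) ∧ ((n : ℝ) - D.s ≤ ∑ i, y i) ∧
  (∀ i, -t ≤ x i * y i ∧ x i * y i ≤ t) ∧ (∀ i, 0 ≤ y i ∧ y i ≤ 1 + D.ε)

/-- Multipliers for T-stationarity (defined on the whole index ranges). -/
structure TMult (n : ℕ) (P Q : Type*) where
  lam : P → ℝ
  mu1 : Q → ℝ
  mu2 : Fin n → ℝ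
  mu3 : ℝ
  sig1 : Fin n → ℝ
  sig2 : Fin n → ℝ
  rho1 : Fin n → ℝ
  rho2 : Fin n → ℝ

/-- The T-stationarity equation (1) of Definition 2. -/
def TStatEq (D : Setting n P Q) (x y : Vec n) (M : TMult n P Q) : Prop :=
  ((grad D.f x, D.c) : Vec n × Vec n) =
    (∑ p, M.lam p • ((grad (D.h p) x, (0 : Vec n)) : Vec n × Vec n))
    + (∑ q ∈ Q0 D x, M.mu1 q • ((grad (D.g q) x, (0 : Vec n)) : Vec n × Vec n))
    - (∑ i ∈ Eact D y, M.mu2 i • ey i)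
    + M.mu3 • eAll
    + (∑ i ∈ a01 x y, M.sig1 i • ex i)
    + (∑ i ∈ a10 x y, M.sig2 i • ey i)
    + (∑ i ∈ a00 x y, (M.rho1 i • ex i + M.rho2 i • ey i))

/-- (x,y) is a T-stationary point of R with multipliers M. -/
def TStatAt (D : Setting n P Q) (x y : Vec n) (M : TMult n P Q) : Prop :=
  feasR D x y ∧
  (∀ q ∈ Q0 D x, 0 ≤ M.mu1 q) ∧
  (∀ i ∈ Eact D y, 0 ≤ M.mu2 i) ∧
  0 ≤ M.mu3 ∧
  M.mu3 * ((∑ i, y i) - ((n : ℝ) - D.s)) = 0 ∧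
  (∀ i ∈ a00 x y, M.rho1 i = 0 ∨ M.rho2 i ≤ 0) ∧
  TStatEq D x y M

/-- (x,y) is a T-stationary point of R. -/
def TStat (D : Setting n P Q) (x y : Vec n) : Prop := ∃ M, TStatAt D x y M

/-- MPOC-tailored LICQ at a feasible point (x,y) of R: the indicated family of
vectors in ℝ²ⁿ is linearly independent. -/
def MPOC_LICQ (D : Setting n P Q) (x y : Vec n) : Prop :=
  ∀ (lam : P → ℝ) (mu1 : Q → ℝ) (mu2 : Fin n → ℝ) (mu3 : ℝ) (s1 s2 : Fin n → ℝ),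
    ((∑ i, y i) ≠ (n : ℝ) - D.s → mu3 = 0) →
    (∑ p, lam p • ((grad (D.h p) x, (0 : Vec n)) : Vec n × Vec n))
    + (∑ q ∈ Q0 D x, mu1 q • ((grad (D.g q) x, (0 : Vec n)) : Vec n × Vec n))
    + (∑ i ∈ Eact D y, mu2 i • ey i)
    + mu3 • eAll
    + (∑ i ∈ a01 x y ∪ a00 x y, s1 i • ex i)
    + (∑ i ∈ a10 x y ∪ a00 x y, s2 i • ey i) = 0 →
    (∀ p, lam p = 0) ∧ (∀ q ∈ Q0 D x, mu1 q = 0) ∧ (∀ i ∈ Eact D y, mu2 i = 0) ∧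
    mu3 = 0 ∧ (∀ i ∈ a01 x y ∪ a00 x y, s1 i = 0) ∧ (∀ i ∈ a10 x y ∪ a00 x y, s2 i = 0)

/-- The Lagrange function L^R associated with the T-stationary point (x̄,ȳ)
and multipliers M. -/
def LagR (D : Setting n P Q) (xb yb : Vec n) (M : TMult n P Q) (z : Vec n × Vec n) : ℝ :=
  D.f z.1 + dot D.c z.2
    - (∑ p, M.lam p * D.h p z.1)
    - (∑ q ∈ Q0 D xb, M.mu1 q * D.g q z.1)
    + (∑ i ∈ Eact D yb, M.mu2 i * (z.2 i - (1 + D.ε)))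
    - M.mu3 * ((∑ i, z.2 i) - ((n : ℝ) - D.s))
    - (∑ i ∈ a01 xb yb, M.sig1 i * z.1 i)
    - (∑ i ∈ a10 xb yb, M.sig2 i * z.2 i)
    - (∑ i ∈ a00 xb yb, (M.rho1 i * z.1 i + M.rho2 i * z.2 i))

/-- Membership in the tangent space T^R at (x̄,ȳ). -/
def inTR (D : Setting n P Q) (x y : Vec n) (ξ : Vec n × Vec n) : Prop :=
  (∀ p, dot (grad (D.h p) x) ξ.1 = 0) ∧
  (∀ q ∈ Q0 D x, dot (grad (D.g q) x) ξ.1 = 0) ∧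
  (∀ i ∈ Eact D y, ξ.2 i = 0) ∧
  ((∑ i, y i) = (n : ℝ) - D.s → (∑ i, ξ.2 i) = 0) ∧
  (∀ i ∈ a00 x y ∪ a01 x y, ξ.1 i = 0) ∧
  (∀ i ∈ a00 x y ∪ a10 x y, ξ.2 i = 0)

/-- Nondegenerate T-stationary point with multipliers M (NDT1–NDT4). -/
def NondegTStatAt (D : Setting n P Q) (x y : Vec n) (M : TMult n P Q) : Prop :=
  TStatAt D x y M ∧
  MPOC_LICQ D x y ∧
  (∀ q ∈ Q0 D x, 0 < M.mu1 q) ∧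
  (∀ i ∈ Eact D y, 0 < M.mu2 i) ∧
  ((∑ i, y i) = (n : ℝ) - D.s → 0 < M.mu3) ∧
  (∀ i ∈ a00 x y, M.rho1 i ≠ 0 ∧ M.rho2 i < 0) ∧
  (∀ ξ, inTR D x y ξ → (∀ ζ, inTR D x y ζ → hess (LagR D x y M) (x, y) ξ ζ = 0) → ξ = 0)

/-- T-index: quadratic index (number of negative eigenvalues of the restricted
Hessian of L^R) plus the biactive index |a00|. -/
def TIndex (D : Setting n P Q) (x y : Vec n) (M : TMult n P Q) : ℕ :=
  negIndex (hess (LagR D x y M) (x, y)) (inTR D x y) + (a00 x y).card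

/-- Multipliers for KKT points of S(t) (defined on the whole index ranges). -/
structure SMult (n : ℕ) (P Q : Type*) where
  lam : P → ℝ
  mu1 : Q → ℝ
  mu2 : Fin n → ℝ
  mu3 : ℝ
  etaGe : Fin n → ℝ
  etaLe : Fin n → ℝ
  nu : Fin n → ℝ

/-- The KKT equation for S(t). -/
def KKTEq (D : Setting n P Q) (t : ℝ) (x y : Vec n) (M : SMult n P Q) : Prop :=
  ((grad D.f x, D.c) : Vec n × Vec n) =
    (∑ p, M.lam p • ((grad (D.h p) x, (0 : Vec n)) : Vec n × Vec n))
    + (∑ q ∈ Q0 D x, M.mu1 q • ((grad (D.g q) x, (0 : Vec n)) : Vec n × Vec n))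
    - (∑ i ∈ Eact D y, M.mu2 i • ey i)
    + M.mu3 • eAll
    + (∑ i ∈ Hge t x y, M.etaGe i • hvec x y i)
    - (∑ i ∈ Hle t x y, M.etaLe i • hvec x y i)
    + (∑ i ∈ Nact y, M.nu i • ey i)

/-- (x,y) is a KKT point of S(t) with multipliers M. -/
def KKTAt (D : Setting n P Q) (t : ℝ) (x y : Vec n) (M : SMult n P Q) : Prop :=
  feasS D t x y ∧
  (∀ q ∈ Q0 D x, 0 ≤ M.mu1 q) ∧
  (∀ i ∈ Eact D y, 0 ≤ M.mu2 i) ∧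
  0 ≤ M.mu3 ∧
  M.mu3 * ((∑ i, y i) - ((n : ℝ) - D.s)) = 0 ∧
  (∀ i ∈ Hge t x y, 0 ≤ M.etaGe i) ∧
  (∀ i ∈ Hle t x y, 0 ≤ M.etaLe i) ∧
  (∀ i ∈ Nact y, 0 ≤ M.nu i) ∧
  KKTEq D t x y M

/-- (x,y) is a KKT point of S(t). -/
def KKT (D : Setting n P Q) (t : ℝ) (x y : Vec n) : Prop := ∃ M, KKTAt D t x y M

/-- LICQ at a feasible point (x,y) of S(t). -/
def LICQ (D : Setting n P Q) (t : ℝ) (x y : Vec n) : Prop :=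
  ∀ (lam : P → ℝ) (mu1 : Q → ℝ) (mu2 : Fin n → ℝ) (mu3 : ℝ) (eta nu : Fin n → ℝ),
    ((∑ i, y i) ≠ (n : ℝ) - D.s → mu3 = 0) →
    (∑ p, lam p • ((grad (D.h p) x, (0 : Vec n)) : Vec n × Vec n))
    + (∑ q ∈ Q0 D x, mu1 q • ((grad (D.g q) x, (0 : Vec n)) : Vec n × Vec n))
    + (∑ i ∈ Eact D y, mu2 i • ey i)
    + mu3 • eAll
    + (∑ i ∈ Hact t x y, eta i • hvec x y i)
    + (∑ i ∈ Nact y, nu i • ey i) = 0 →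
    (∀ p, lam p = 0) ∧ (∀ q ∈ Q0 D x, mu1 q = 0) ∧ (∀ i ∈ Eact D y, mu2 i = 0) ∧
    mu3 = 0 ∧ (∀ i ∈ Hact t x y, eta i = 0) ∧ (∀ i ∈ Nact y, nu i = 0)

/-- The Lagrange function L^S associated with the KKT point (x̄,ȳ) of S(t)
and multipliers M. -/
def LagS (D : Setting n P Q) (t : ℝ) (xb yb : Vec n) (M : SMult n P Q)
    (z : Vec n × Vec n) : ℝ :=
  D.f z.1 + dot D.c z.2
    - (∑ p, M.lam p * D.h p z.1)
    - (∑ q ∈ Q0 D xb, M.mu1 q * D.g q z.1)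
    + (∑ i ∈ Eact D yb, M.mu2 i * (z.2 i - (1 + D.ε)))
    - M.mu3 * ((∑ i, z.2 i) - ((n : ℝ) - D.s))
    - (∑ i ∈ Hge t xb yb, M.etaGe i * (z.1 i * z.2 i + t))
    + (∑ i ∈ Hle t xb yb, M.etaLe i * (z.1 i * z.2 i - t))
    - (∑ i ∈ Nact yb, M.nu i * z.2 i)

/-- Membership in the tangent space T^S at (x,y) for S(t). -/
def inTS (D : Setting n P Q) (t : ℝ) (x y : Vec n) (ξ : Vec n × Vec n) : Prop :=
  (∀ p, dot (grad (D.h p) x) ξ.1 = 0) ∧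
  (∀ q ∈ Q0 D x, dot (grad (D.g q) x) ξ.1 = 0) ∧
  (∀ i ∈ Eact D y, ξ.2 i = 0) ∧
  ((∑ i, y i) = (n : ℝ) - D.s → (∑ i, ξ.2 i) = 0) ∧
  (∀ i ∈ Hact t x y, y i * ξ.1 i + x i * ξ.2 i = 0) ∧
  (∀ i ∈ Nact y, ξ.2 i = 0)

/-- Nondegenerate KKT point of S(t) with multipliers M (ND1–ND3). -/
def NondegKKTAt (D : Setting n P Q) (t : ℝ) (x y : Vec n) (M : SMult n P Q) : Prop :=
  KKTAt D t x y M ∧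
  LICQ D t x y ∧
  (∀ q ∈ Q0 D x, 0 < M.mu1 q) ∧
  (∀ i ∈ Eact D y, 0 < M.mu2 i) ∧
  (∀ i ∈ Hge t x y, 0 < M.etaGe i) ∧
  (∀ i ∈ Hle t x y, 0 < M.etaLe i) ∧
  (∀ i ∈ Nact y, 0 < M.nu i) ∧
  ((∑ i, y i) = (n : ℝ) - D.s → 0 < M.mu3) ∧
  (∀ ξ, inTS D t x y ξ → (∀ ζ, inTS D t x y ζ → hess (LagS D t x y M) (x, y) ξ ζ = 0) → ξ = 0)

/-- Quadratic index of a KKT point of S(t): number of negative eigenvalues of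
the restricted Hessian of L^S. -/
def QIdx (D : Setting n P Q) (t : ℝ) (x y : Vec n) (M : SMult n P Q) : ℕ :=
  negIndex (hess (LagS D t x y M) (x, y)) (inTS D t x y)


/-! Suppose a biactive index `i₀` leaves `H(xᵏ, yᵏ)` infinitely often; along those `k` the
coefficient of `(e_{i₀}, 0)` in the KKT equation of `S(tₖ)` vanishes. Regrouping the KKT
equation as a combination of the constraint gradients of R, MPOC-LICQ at `(x̄, ȳ)` makes the
limit system uniquely solvable, so the (normalized) KKT multipliers cannot blow up and their
limit is the T-stationary multiplier. Hence `ϱ̄_{1,i₀} = 0`, contradicting NDT3. -/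

theorem sum_smul_eq_of_forall_notMem {ι R M : Type*} [Fintype ι] [Semiring R] [AddCommMonoid M]
    [Module R M] {s : Finset ι} {a : ι → R} {v : ι → M} (ha : ∀ i ∉ s, a i = 0) :
    ∑ i ∈ s, a i • v i = ∑ i, a i • v i :=
  Fintype.sum_subset fun i hi => by_contra fun h => hi (by rw [ha i h, zero_smul])

theorem exists_sum_smul_eq_of_tendsto {ι F : Type*} [Fintype ι] [NormedAddCommGroup F]
    [NormedSpace ℝ F] {Z : Set ι} {v : ℕ → ι → F} {v₀ : ι → F} {b : ℕ → F} {b₀ : F}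
    {c : ℕ → ι → ℝ} (hv : Tendsto v atTop (𝓝 v₀)) (hb : Tendsto b atTop (𝓝 b₀))
    (hinj : ∀ a : ι → ℝ, (∀ j ∈ Z, a j = 0) → ∑ j, a j • v₀ j = 0 → a = 0)
    (hcZ : ∀ k, ∀ j ∈ Z, c k j = 0) (hc : ∀ k, ∑ j, c k j • v k j = b k) :
    ∃ a : ι → ℝ, (∀ j ∈ Z, a j = 0) ∧ ∑ j, a j • v₀ j = b₀ := by
  -- Normalize by `1 + ‖c k‖`: if the normalizing factors tend to `0`, the normalized
  -- coefficients converge to a unit vector solving the homogeneous limit system.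
  set τ : ℕ → ℝ := fun k => (1 + ‖c k‖)⁻¹
  have hτ : ∀ k, 0 < τ k := fun k => by positivity
  have hnorm : ∀ k, ‖τ k • c k‖ = 1 - τ k := fun k => by
    have : (0 : ℝ) < 1 + ‖c k‖ := by positivity
    rw [norm_smul, Real.norm_of_nonneg (hτ k).le]
    simp only [τ]
    field_simp
    ring
  have hbdd : ∀ k, (τ k • c k, τ k) ∈ Metric.closedBall (0 : (ι → ℝ) × ℝ) 1 := fun k => by
    have : τ k ≤ 1 := inv_le_one_of_one_le₀ (by linarith [norm_nonneg (c k)])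
    rw [mem_closedBall_zero_iff, Prod.norm_def, hnorm, Real.norm_of_nonneg (hτ k).le]
    exact max_le (by linarith [hτ k]) this
  obtain ⟨⟨a, s⟩, -, ψ, hψ, hlim⟩ := tendsto_subseq_of_bounded Metric.isBounded_closedBall hbdd
  have ha : Tendsto (fun k => τ (ψ k) • c (ψ k)) atTop (𝓝 a) := (continuous_fst.tendsto _).comp hlim
  have hs : Tendsto (fun k => τ (ψ k)) atTop (𝓝 s) := (continuous_snd.tendsto _).comp hlim
  have haZ : ∀ j ∈ Z, a j = 0 := fun j hj =>
    tendsto_nhds_unique ((continuous_apply j).tendsto a |>.comp ha)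
      (tendsto_const_nhds.congr fun k => by simp [hcZ (ψ k) j hj])
  have hsum : ∑ j, a j • v₀ j = s • b₀ := by
    have hlhs : Tendsto (fun k => ∑ j, (τ (ψ k) • c (ψ k)) j • v (ψ k) j) atTop
        (𝓝 (∑ j, a j • v₀ j)) :=
      tendsto_finsetSum _ fun j _ => ((continuous_apply j).tendsto a |>.comp ha).smul
        ((continuous_apply j).tendsto v₀ |>.comp (hv.comp hψ.tendsto_atTop))
    refine tendsto_nhds_unique hlhs ((hs.smul (hb.comp hψ.tendsto_atTop)).congr fun k => ?_)
    simp [← hc (ψ k), Finset.smul_sum, smul_smul]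
  have hnorm_a : ‖a‖ = 1 - s :=
    tendsto_nhds_unique (ha.norm) ((tendsto_const_nhds.sub hs).congr fun k => (hnorm (ψ k)).symm)
  rcases eq_or_ne s 0 with rfl | hs0
  · have : a = 0 := hinj a haZ (by rw [hsum, zero_smul])
    simp [this] at hnorm_a
  · refine ⟨s⁻¹ • a, fun j hj => by simp [haZ j hj], ?_⟩
    calc ∑ j, (s⁻¹ • a) j • v₀ j = s⁻¹ • ∑ j, a j • v₀ j := by
          simp [Finset.smul_sum, smul_smul]
      _ = b₀ := by rw [hsum, smul_smul, inv_mul_cancel₀ hs0, one_smul]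

theorem exists_sum_smul_eq_of_frequently {ι F : Type*} [Fintype ι] [NormedAddCommGroup F]
    [NormedSpace ℝ F] {Z : Set ι} {v : ℕ → ι → F} {v₀ : ι → F} {b : ℕ → F} {b₀ : F}
    {c : ℕ → ι → ℝ} (hv : Tendsto v atTop (𝓝 v₀)) (hb : Tendsto b atTop (𝓝 b₀))
    (hinj : ∀ a : ι → ℝ, (∀ j ∈ Z, a j = 0) → ∑ j, a j • v₀ j = 0 → a = 0)
    (hc : ∃ᶠ k in atTop, (∀ j ∈ Z, c k j = 0) ∧ ∑ j, c k j • v k j = b k) :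
    ∃ a : ι → ℝ, (∀ j ∈ Z, a j = 0) ∧ ∑ j, a j • v₀ j = b₀ := by
  obtain ⟨φ, hφ, hcφ⟩ := extraction_of_frequently_atTop hc
  exact exists_sum_smul_eq_of_tendsto (hv.comp hφ.tendsto_atTop) (hb.comp hφ.tendsto_atTop) hinj
    (fun k => (hcφ k).1) (fun k => (hcφ k).2)

abbrev Coeff (n : ℕ) (P Q : Type*) := Fin n ⊕ Fin n ⊕ Fin n ⊕ Unit ⊕ P ⊕ Q

/-- The second component makes `∑ j, c j • constraintFamily D x y j` record
`c_{x,i} xᵢ - c_{y,i} yᵢ`. KKT multipliers of `S(t)` make it vanish, and at a feasible point of R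
this confines the support of the `x`- resp. `y`-side coefficients to `a01 ∪ a00` resp.
`a10 ∪ a00`, as in MPOC-LICQ. -/
def constraintFamily (D : Setting n P Q) (x y : Vec n) :
    Coeff n P Q → (Vec n × Vec n) × Vec n
  | .inl i => (ex i, Pi.single i (x i))
  | .inr (.inl i) => (ey i, -Pi.single i (y i))
  | .inr (.inr (.inl i)) => (ey i, 0)
  | .inr (.inr (.inr (.inl _))) => (eAll, 0)
  | .inr (.inr (.inr (.inr (.inl p)))) => ((grad (D.h p) x, 0), 0)
  | .inr (.inr (.inr (.inr (.inr q)))) => ((grad (D.g q) x, 0), 0)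

theorem sum_smul_constraintFamily (D : Setting n P Q) (x y : Vec n) (c : Coeff n P Q → ℝ) :
    ∑ j, c j • constraintFamily D x y j =
      ((∑ p, c (.inr (.inr (.inr (.inr (.inl p))))) •
            ((grad (D.h p) x, (0 : Vec n)) : Vec n × Vec n)
          + ∑ q, c (.inr (.inr (.inr (.inr (.inr q))))) •
            ((grad (D.g q) x, (0 : Vec n)) : Vec n × Vec n)
          + ∑ i, c (.inr (.inr (.inl i))) • ey i
          + c (.inr (.inr (.inr (.inl ())))) • eAll
          + ∑ i, c (.inl i) • ex i
          + ∑ i, c (.inr (.inl i)) • ey i),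
        fun m => c (.inl m) * x m - c (.inr (.inl m)) * y m) := by
  ext1
  · simp [Fintype.sum_sum_type, constraintFamily, Prod.fst_sum]
    abel
  · funext m
    simp [Fintype.sum_sum_type, constraintFamily, Prod.snd_sum, Finset.sum_apply, Pi.single_apply,
      sub_eq_add_neg]

theorem hvec_eq (x y : Vec n) (i : Fin n) : hvec x y i = y i • ex i + x i • ey i := by
  ext <;> simp [hvec, ex, ey, Pi.single_apply]

def kktCoeff (D : Setting n P Q) (t : ℝ) (x y : Vec n) (M : SMult n P Q) : Coeff n P Q → ℝ
  | .inl i => (if i ∈ Hge t x y then M.etaGe i * y i else 0)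
      - (if i ∈ Hle t x y then M.etaLe i * y i else 0)
  | .inr (.inl i) => (if i ∈ Hge t x y then M.etaGe i * x i else 0)
      - (if i ∈ Hle t x y then M.etaLe i * x i else 0) + (if i ∈ Nact y then M.nu i else 0)
  | .inr (.inr (.inl i)) => -(if i ∈ Eact D y then M.mu2 i else 0)
  | .inr (.inr (.inr (.inl _))) => M.mu3
  | .inr (.inr (.inr (.inr (.inl p)))) => M.lam p
  | .inr (.inr (.inr (.inr (.inr q)))) => if q ∈ Q0 D x then M.mu1 q else 0

def tstatCoeff (D : Setting n P Q) (x y : Vec n) (M : TMult n P Q) : Coeff n P Q → ℝ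
  | .inl i => (if i ∈ a01 x y then M.sig1 i else 0) + (if i ∈ a00 x y then M.rho1 i else 0)
  | .inr (.inl i) => (if i ∈ a10 x y then M.sig2 i else 0) + (if i ∈ a00 x y then M.rho2 i else 0)
  | .inr (.inr (.inl i)) => -(if i ∈ Eact D y then M.mu2 i else 0)
  | .inr (.inr (.inr (.inl _))) => M.mu3
  | .inr (.inr (.inr (.inr (.inl p)))) => M.lam p
  | .inr (.inr (.inr (.inr (.inr q)))) => if q ∈ Q0 D x then M.mu1 q else 0

theorem sum_smul_constraintFamily_kktCoeff {D : Setting n P Q} {t : ℝ} {x y : Vec n}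
    {M : SMult n P Q} (h : KKTEq D t x y M) :
    ∑ j, kktCoeff D t x y M j • constraintFamily D x y j = ((grad D.f x, D.c), 0) := by
  rw [sum_smul_constraintFamily, h]
  ext1
  · simp [kktCoeff, ite_smul, Finset.sum_ite_mem, hvec_eq, add_smul, sub_smul, smul_smul,
      Finset.sum_add_distrib]
    abel
  · funext m
    have : m ∈ Nact y → y m = 0 := by simp [Nact]
    simp only [kktCoeff, Pi.zero_apply]
    split_ifs <;> simp_all <;> ring

theorem sum_smul_constraintFamily_tstatCoeff {D : Setting n P Q} {x y : Vec n}
    {M : TMult n P Q} (h : TStatEq D x y M) :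
    ∑ j, tstatCoeff D x y M j • constraintFamily D x y j = ((grad D.f x, D.c), 0) := by
  rw [sum_smul_constraintFamily, h]
  ext1
  · simp [tstatCoeff, ite_smul, Finset.sum_ite_mem, add_smul, Finset.sum_add_distrib]
    abel
  · funext m
    have h01 : m ∈ a01 x y → x m = 0 := by simp_all [a01]
    have h00 : m ∈ a00 x y → x m = 0 ∧ y m = 0 := by simp_all [a00]
    have h10 : m ∈ a10 x y → y m = 0 := by simp_all [a10]
    simp only [tstatCoeff, Pi.zero_apply]
    split_ifs <;> simp_all

def Inactive (D : Setting n P Q) (xb yb : Vec n) : Coeff n P Q → Prop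
  | .inr (.inr (.inl i)) => i ∉ Eact D yb
  | .inr (.inr (.inr (.inl _))) => ∑ i, yb i ≠ (n : ℝ) - D.s
  | .inr (.inr (.inr (.inr (.inr q)))) => q ∉ Q0 D xb
  | _ => False

theorem eq_zero_of_mul_eq_mul_of_notMem_a01 {x y : Vec n} {i : Fin n} {a b : ℝ}
    (hxy : x i * y i = 0) (hy : 0 ≤ y i) (h : a * x i = b * y i)
    (hi : i ∉ a01 x y ∪ a00 x y) : a = 0 := by
  have hx : x i ≠ 0 := fun hx => hi <| by
    rcases hy.lt_or_eq with hy | hy <;> simp [a01, a00, hx, hy]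
  have hy0 : y i = 0 := (mul_eq_zero.1 hxy).resolve_left hx
  simpa [hy0, hx] using h

theorem eq_zero_of_mul_eq_mul_of_notMem_a10 {x y : Vec n} {i : Fin n} {a b : ℝ}
    (hxy : x i * y i = 0) (h : a * x i = b * y i)
    (hi : i ∉ a10 x y ∪ a00 x y) : b = 0 := by
  have hy : y i ≠ 0 := fun hy => hi <| by
    by_cases hx : x i = 0 <;> simp [a10, a00, hx, hy]
  have hx0 : x i = 0 := (mul_eq_zero.1 hxy).resolve_right hy
  simpa [hx0, hy] using h.symm

theorem eq_zero_of_sum_smul_constraintFamily_eq_zero {D : Setting n P Q} {xb yb : Vec n}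
    (hfeas : feasR D xb yb) (hL : MPOC_LICQ D xb yb) (c : Coeff n P Q → ℝ)
    (hc : ∀ j, Inactive D xb yb j → c j = 0)
    (h : ∑ j, c j • constraintFamily D xb yb j = 0) : c = 0 := by
  rw [sum_smul_constraintFamily, Prod.mk_eq_zero] at h
  obtain ⟨hgrad, hrel⟩ := h
  have hrel' (i : Fin n) : c (.inl i) * xb i = c (.inr (.inl i)) * yb i :=
    sub_eq_zero.1 (congrFun hrel i)
  have hx (i : Fin n) (hi : i ∉ a01 xb yb ∪ a00 xb yb) : c (.inl i) = 0 :=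
    eq_zero_of_mul_eq_mul_of_notMem_a01 (hfeas.2.2.2.1 i) (hfeas.2.2.2.2 i).1 (hrel' i) hi
  have hy (i : Fin n) (hi : i ∉ a10 xb yb ∪ a00 xb yb) : c (.inr (.inl i)) = 0 :=
    eq_zero_of_mul_eq_mul_of_notMem_a10 (hfeas.2.2.2.1 i) (hrel' i) hi
  obtain ⟨hlam, hmu1, hmu2, hmu3, hs1, hs2⟩ := hL (fun p => c (.inr (.inr (.inr (.inr (.inl p))))))
    (fun q => c (.inr (.inr (.inr (.inr (.inr q)))))) (fun i => c (.inr (.inr (.inl i))))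
    (c (.inr (.inr (.inr (.inl ()))))) (fun i => c (.inl i)) (fun i => c (.inr (.inl i)))
    (hc (.inr (.inr (.inr (.inl ()))))) (by
      rw [sum_smul_eq_of_forall_notMem (fun q hq => hc (.inr (.inr (.inr (.inr (.inr q))))) hq),
        sum_smul_eq_of_forall_notMem (fun i hi => hc (.inr (.inr (.inl i))) hi),
        sum_smul_eq_of_forall_notMem hx, sum_smul_eq_of_forall_notMem hy, ← hgrad])
  funext j
  rcases j with i | i | i | ⟨⟩ | p | q
  · by_cases hi : i ∈ a01 xb yb ∪ a00 xb yb
    · exact hs1 i hi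
    · exact hx i hi
  · by_cases hi : i ∈ a10 xb yb ∪ a00 xb yb
    · exact hs2 i hi
    · exact hy i hi
  · by_cases hi : i ∈ Eact D yb
    · exact hmu2 i hi
    · exact hc _ hi
  · exact hmu3
  · exact hlam p
  · by_cases hq : q ∈ Q0 D xb
    · exact hmu1 q hq
    · exact hc _ hq

theorem continuous_grad {f : Vec n → ℝ} (hf : ContDiff ℝ 2 f) : Continuous (grad f) :=
  continuous_pi fun _ => (hf.continuous_fderiv (by norm_num)).clm_apply continuous_const

theorem continuous_constraintFamily (D : Setting n P Q) :
    Continuous fun z : Vec n × Vec n => constraintFamily D z.1 z.2 := by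
  refine continuous_pi fun j => ?_
  rcases j with i | i | i | ⟨⟩ | p | q <;> simp only [constraintFamily]
  · exact continuous_const.prodMk
      ((continuous_single i).comp ((continuous_apply i).comp continuous_fst))
  · exact continuous_const.prodMk
      ((continuous_single i).comp ((continuous_apply i).comp continuous_snd)).neg
  · exact continuous_const
  · exact continuous_const
  · exact (((continuous_grad (D.hh p)).comp continuous_fst).prodMk continuous_const).prodMk
      continuous_const
  · exact (((continuous_grad (D.hg q)).comp continuous_fst).prodMk continuous_const).prodMk
      continuous_const

section Eventually

variable {α : Type*} {l : Filter α} {D : Setting n P Q} {X Y : α → Vec n} {xb yb : Vec n}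

theorem eventually_Q0_subset (hX : Tendsto X l (𝓝 xb)) : ∀ᶠ k in l, Q0 D (X k) ⊆ Q0 D xb := by
  have (q : Q) : ∀ᶠ k in l, D.g q (X k) = 0 → D.g q xb = 0 := by
    by_cases hq : D.g q xb = 0
    · exact .of_forall fun _ _ => hq
    · exact ((((D.hg q).continuous.tendsto xb).comp hX).eventually_ne hq).mono
        fun _ hk h => absurd h hk
  filter_upwards [eventually_all.2 this] with k hk q
  simpa [Q0] using hk q

theorem eventually_Eact_subset (hY : Tendsto Y l (𝓝 yb)) :
    ∀ᶠ k in l, Eact D (Y k) ⊆ Eact D yb := by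
  have (i : Fin n) : ∀ᶠ k in l, Y k i = 1 + D.ε → yb i = 1 + D.ε := by
    by_cases hi : yb i = 1 + D.ε
    · exact .of_forall fun _ _ => hi
    · exact ((tendsto_pi_nhds.1 hY i).eventually_ne hi).mono fun _ hk h => absurd h hk
  filter_upwards [eventually_all.2 this] with k hk i
  simpa [Eact] using hk i

theorem eventually_mu3_eq_zero {t : α → ℝ} {M : α → SMult n P Q}
    (hM : ∀ k, KKTAt D (t k) (X k) (Y k) (M k)) (hY : Tendsto Y l (𝓝 yb)) :
    ∀ᶠ k in l, ∑ i, yb i ≠ (n : ℝ) - D.s → (M k).mu3 = 0 := by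
  by_cases hyb : ∑ i, yb i = (n : ℝ) - D.s
  · exact .of_forall fun _ h => absurd hyb h
  · filter_upwards [(tendsto_finsetSum _ fun i _ => tendsto_pi_nhds.1 hY i).eventually_ne hyb]
      with k hk _
    exact (mul_eq_zero.1 (hM k).2.2.2.2.1).resolve_right (sub_ne_zero.2 hk)

theorem eventually_kktCoeff_eq_zero_of_inactive {t : α → ℝ} {M : α → SMult n P Q}
    (hM : ∀ k, KKTAt D (t k) (X k) (Y k) (M k)) (hX : Tendsto X l (𝓝 xb))
    (hY : Tendsto Y l (𝓝 yb)) :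
    ∀ᶠ k in l, ∀ j, Inactive D xb yb j → kktCoeff D (t k) (X k) (Y k) (M k) j = 0 := by
  filter_upwards [eventually_Q0_subset (D := D) hX, eventually_Eact_subset (D := D) hY,
    eventually_mu3_eq_zero hM hY] with k hQ hE hmu3
  rintro (i | i | i | ⟨⟩ | p | q) hj <;> simp only [Inactive] at hj
  · simp [kktCoeff, mt (@hE i) hj]
  · exact hmu3 hj
  · simp [kktCoeff, mt (@hQ q) hj]

end Eventually

theorem kktCoeff_inl_eq_zero {D : Setting n P Q} {t : ℝ} {x y : Vec n} {M : SMult n P Q}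
    {i : Fin n} (hi : i ∉ Hact t x y) : kktCoeff D t x y M (.inl i) = 0 := by
  simp only [Hact, Finset.mem_union, not_or] at hi
  simp [kktCoeff, hi.1, hi.2]

theorem tstatCoeff_eq_zero_of_inactive {D : Setting n P Q} {xb yb : Vec n} {M : TMult n P Q}
    (h : TStatAt D xb yb M) (j : Coeff n P Q) (hj : Inactive D xb yb j) :
    tstatCoeff D xb yb M j = 0 := by
  rcases j with i | i | i | ⟨⟩ | p | q <;> simp only [Inactive] at hj
  · simp [tstatCoeff, hj]
  · exact (mul_eq_zero.1 h.2.2.2.2.1).resolve_right (sub_ne_zero.2 hj)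
  · simp [tstatCoeff, hj]

theorem tstatCoeff_inl_of_mem_a00 {D : Setting n P Q} {x y : Vec n} {M : TMult n P Q}
    {i : Fin n} (hi : i ∈ a00 x y) : tstatCoeff D x y M (.inl i) = M.rho1 i := by
  have : i ∉ a01 x y := by simp_all [a00, a01]
  simp [tstatCoeff, hi, this]

theorem eq_tstatCoeff_of_sum_smul_constraintFamily_eq {D : Setting n P Q} {xb yb : Vec n}
    {M : TMult n P Q} (hstat : TStatAt D xb yb M) (hL : MPOC_LICQ D xb yb) (c : Coeff n P Q → ℝ)
    (hcZ : ∀ j, Inactive D xb yb j → c j = 0)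
    (hc : ∑ j, c j • constraintFamily D xb yb j = ((grad D.f xb, D.c), 0)) :
    c = tstatCoeff D xb yb M :=
  sub_eq_zero.1 <| eq_zero_of_sum_smul_constraintFamily_eq_zero hstat.1 hL _
    (fun j hj => by simp [hcZ j hj, tstatCoeff_eq_zero_of_inactive hstat j hj])
    (by simp [sub_smul, Finset.sum_sub_distrib, hc,
      sum_smul_constraintFamily_tstatCoeff hstat.2.2.2.2.2.2])

theorem exists_limit_kktCoeff {D : Setting n P Q} {t : ℕ → ℝ} {X Y : ℕ → Vec n}
    {M : ℕ → SMult n P Q} {xb yb : Vec n} (hM : ∀ k, KKTAt D (t k) (X k) (Y k) (M k))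
    (hconv : Tendsto (fun k => ((X k, Y k) : Vec n × Vec n)) atTop (𝓝 (xb, yb)))
    (hfeas : feasR D xb yb) (hL : MPOC_LICQ D xb yb) {i₀ : Fin n}
    (hi₀ : ∃ᶠ k in atTop, i₀ ∉ Hact (t k) (X k) (Y k)) :
    ∃ c : Coeff n P Q → ℝ, (∀ j, Inactive D xb yb j → c j = 0) ∧ c (.inl i₀) = 0 ∧
      ∑ j, c j • constraintFamily D xb yb j = ((grad D.f xb, D.c), 0) := by
  have hX : Tendsto X atTop (𝓝 xb) := (continuous_fst.tendsto _).comp hconv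
  have hY : Tendsto Y atTop (𝓝 yb) := (continuous_snd.tendsto _).comp hconv
  have hrhs : Tendsto (fun k => (((grad D.f (X k), D.c), 0) : (Vec n × Vec n) × Vec n)) atTop
      (𝓝 ((grad D.f xb, D.c), 0)) :=
    ((((continuous_grad D.hf).tendsto xb).comp hX).prodMk_nhds tendsto_const_nhds).prodMk_nhds
      tendsto_const_nhds
  obtain ⟨c, hcZ, hc⟩ := exists_sum_smul_eq_of_frequently
    (Z := {j | Inactive D xb yb j ∨ j = .inl i₀})
    (((continuous_constraintFamily D).tendsto _).comp hconv) hrhs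
    (fun a ha => eq_zero_of_sum_smul_constraintFamily_eq_zero hfeas hL a fun j hj => ha j (.inl hj))
    ((hi₀.and_eventually (eventually_kktCoeff_eq_zero_of_inactive hM hX hY)).mono
      fun k ⟨hk, hZ⟩ => ⟨by rintro j (hj | rfl); exacts [hZ j hj, kktCoeff_inl_eq_zero hk],
        sum_smul_constraintFamily_kktCoeff (hM k).2.2.2.2.2.2.2.2⟩)
  exact ⟨c, fun j hj => hcZ j (.inl hj), hcZ _ (.inr rfl), hc⟩

theorem statement12_general {n : ℕ} {P Q : Type*} [Fintype P] [Fintype Q]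
    (D : Setting n P Q) (t : ℕ → ℝ)
    (X Y : ℕ → Vec n) (hK : ∀ k, KKT D (t k) (X k) (Y k))
    (xb yb : Vec n)
    (hconv : Filter.Tendsto (fun k => ((X k, Y k) : Vec n × Vec n))
      Filter.atTop (nhds (xb, yb)))
    (Mb : TMult n P Q) (hnd : NondegTStatAt D xb yb Mb) :
    ∃ K : ℕ, ∀ k ≥ K, a00 xb yb ⊆ Hact (t k) (X k) (Y k) := by
  choose M hM using hK
  suffices h : ∀ i ∈ a00 xb yb, ∀ᶠ k in atTop, i ∈ Hact (t k) (X k) (Y k) by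
    obtain ⟨K, hK⟩ := eventually_atTop.1 ((eventually_all_finset _).2 h)
    exact ⟨K, fun k hk i hi => hK k hk i hi⟩
  intro i₀ hi₀
  by_contra hfreq
  obtain ⟨hstat, hL, -, -, -, hrho, -⟩ := hnd
  obtain ⟨c, hcZ, hci₀, hc⟩ := exists_limit_kktCoeff hM hconv hstat.1 hL (not_eventually.1 hfreq)
  have hcMb : c = tstatCoeff D xb yb Mb :=
    eq_tstatCoeff_of_sum_smul_constraintFamily_eq hstat hL c hcZ hc
  refine (hrho i₀ hi₀).1 ?_
  rw [← tstatCoeff_inl_of_mem_a00 hi₀, ← hcMb, hci₀]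

/-- Lemma 3c: if KKT points of S(t_k) converge to a
nondegenerate T-stationary point of R, then eventually a00(x̄,ȳ) ⊆ H(x^k,y^k). -/
theorem statement12 {n : ℕ} {P Q : Type*} [Fintype P] [Fintype Q]
    (D : Setting n P Q) (t : ℕ → ℝ) (htpos : ∀ k, 0 < t k)
    (ht0 : Filter.Tendsto t Filter.atTop (nhds 0))
    (X Y : ℕ → Vec n) (hK : ∀ k, KKT D (t k) (X k) (Y k))
    (xb yb : Vec n)
    (hconv : Filter.Tendsto (fun k => ((X k, Y k) : Vec n × Vec n))
      Filter.atTop (nhds (xb, yb)))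
    (Mb : TMult n P Q) (hnd : NondegTStatAt D xb yb Mb) :
    ∃ K : ℕ, ∀ k ≥ K, a00 xb yb ⊆ Hact (t k) (X k) (Y k) :=
  statement12_general D t X Y hK xb yb hconv Mb hnd

end Scholtes
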